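/- Let h₁ = e₁₂ and h₂ = e₃₊ in CGA₊ (the Villarceau motion C = (t−e₁₂)(t−e₃₊)). Then: (i) h₁ and h₂ commute: e₁₂·e₃₊ = e₃₊·e₁₂; (ii) t−h₁, t−h₂ and C = (t−h₁)(t−h₂) are motion polynomials; (iii) u := h₁ − h̃₂ = e₁₂ + e₃₊ satisfies u·ũ = 2(1 − e₁₂₃₊) and (u·ũ)·(1 + e₁₂₃₊) = 0 with 1 + e₁₂₃₊ ≠ 0, so u·ũ is a zero divisor; hence h₁ − h̃₂ is not invertible and the factorization of C is irregular. -/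

import Mathlib

open Polynomial

/-- The quadratic form of signature (4,1) on ℝ⁵ defining conformal geometric algebra. -/
noncomputable def Qcga : QuadraticForm ℝ (Fin 5 → ℝ) :=
  QuadraticMap.weightedSumSquares ℝ (fun i : Fin 5 => if (i : ℕ) = 4 then (-1 : ℝ) else 1)

/-- Conformal geometric algebra CGA = Cl(4,1). -/
abbrev CGA := CliffordAlgebra Qcga

/-- The generators e₁, e₂, e₃, e₊, e₋ of CGA (indexed 0,…,4). -/
noncomputable def eCGA (i : Fin 5) : CGA := CliffordAlgebra.ι Qcga (Pi.single i 1)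

/-- Coefficientwise reversion of a polynomial over CGA. -/
noncomputable def prev (P : Polynomial CGA) : Polynomial CGA :=
  P.sum fun n a => C (CliffordAlgebra.reverse a) * X ^ n

/-- `P` is a motion polynomial: `P·P̃ = P̃·P` is a nonzero real polynomial. -/
def IsMotionPoly (P : Polynomial CGA) : Prop :=
  ∃ p : Polynomial ℝ, p ≠ 0 ∧ P * prev P = p.map (algebraMap ℝ CGA) ∧
    prev P * P = p.map (algebraMap ℝ CGA)

lemma Qcga_single (i : Fin 5) : Qcga (Pi.single i 1) = if (i : ℕ) = 4 then (-1 : ℝ) else 1 := by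
  fin_cases i <;>
    simp [Qcga, QuadraticMap.weightedSumSquares_apply, Fin.sum_univ_five, Pi.single_apply] <;>
      decide

lemma e_sq (i : Fin 5) (h : (i : ℕ) ≠ 4) : eCGA i * eCGA i = 1 := by
  rw [eCGA, CliffordAlgebra.ι_sq_scalar, Qcga_single, if_neg h, map_one]

lemma polar_single (i j : Fin 5) (h : i ≠ j) :
    QuadraticMap.polar Qcga (Pi.single i 1) (Pi.single j 1) = 0 := by
  fin_cases i <;> fin_cases j <;>
    simp_all [QuadraticMap.polar, Qcga, QuadraticMap.weightedSumSquares_apply,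
      Fin.sum_univ_five, Pi.single_apply]

lemma e_anti (i j : Fin 5) (h : i ≠ j) : eCGA i * eCGA j = -(eCGA j * eCGA i) := by
  have := CliffordAlgebra.ι_mul_ι_add_swap (Q := Qcga) (Pi.single i 1) (Pi.single j 1)
  rw [polar_single i j h, map_zero] at this
  rw [eCGA, eCGA]
  linear_combination (norm := module) this


lemma prev_coeff (P : Polynomial CGA) (k : ℕ) :
    (prev P).coeff k = CliffordAlgebra.reverse (P.coeff k) := by
  rw [prev, Polynomial.sum, Polynomial.finset_sum_coeff]
  simp only [Polynomial.coeff_C_mul, Polynomial.coeff_X_pow, mul_ite, mul_one, mul_zero]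
  rw [Finset.sum_ite_eq P.support k (fun n => CliffordAlgebra.reverse (P.coeff n))]
  split_ifs with h
  · rfl
  · rw [Polynomial.notMem_support_iff.mp h, map_zero]

lemma prev_mul (P Q : Polynomial CGA) : prev (P * Q) = prev Q * prev P := by
  ext n
  rw [prev_coeff, Polynomial.coeff_mul, Polynomial.coeff_mul, map_sum]
  conv_rhs => rw [← Finset.HasAntidiagonal.map_swap_antidiagonal, Finset.sum_map]
  refine Finset.sum_congr rfl fun x _ => ?_
  simp [prev_coeff, CliffordAlgebra.reverse.map_mul]

lemma prev_linear (h : CGA) : prev (X - C h) = X - C (CliffordAlgebra.reverse h) := by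
  ext n
  rw [prev_coeff]
  rcases n with _ | _ | n <;>
    simp [Polynomial.coeff_X, Polynomial.coeff_C]

lemma e_sq' (i : Fin 5) (h : (i : ℕ) ≠ 4) (x : CGA) : eCGA i * (eCGA i * x) = x := by
  rw [← mul_assoc, e_sq i h, one_mul]

lemma e_anti' (i j : Fin 5) (h : i ≠ j) (x : CGA) :
    eCGA i * (eCGA j * x) = -(eCGA j * (eCGA i * x)) := by
  rw [← mul_assoc, e_anti i j h, neg_mul, mul_assoc]

lemma rev_pair (i j : Fin 5) :
    CliffordAlgebra.reverse (eCGA i * eCGA j) = eCGA j * eCGA i := by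
  simp [eCGA, CliffordAlgebra.reverse.map_mul]

lemma cga_one_ne_zero : (1 : CGA) ≠ 0 := by
  letI : Invertible (2 : ℝ) := invertibleOfNonzero two_ne_zero
  exact one_ne_zero

lemma one_add_e1234_ne_zero : (1 : CGA) + eCGA 0 * eCGA 1 * eCGA 2 * eCGA 3 ≠ 0 := by
  intro h
  have h' := congrArg (fun x =>
      (CliffordAlgebra.contractLeft (LinearMap.proj (3 : Fin 5))
        (CliffordAlgebra.contractLeft (LinearMap.proj (2 : Fin 5))
          (CliffordAlgebra.contractLeft (LinearMap.proj (1 : Fin 5))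
            (CliffordAlgebra.contractLeft (LinearMap.proj (0 : Fin 5)) x))))) h
  simp only [map_zero, map_add] at h'
  rw [show eCGA 0 * eCGA 1 * eCGA 2 * eCGA 3
      = CliffordAlgebra.ι Qcga (Pi.single 0 1) * (CliffordAlgebra.ι Qcga (Pi.single 1 1) *
        (CliffordAlgebra.ι Qcga (Pi.single 2 1) * CliffordAlgebra.ι Qcga (Pi.single 3 1)))
    from by simp [eCGA, mul_assoc]] at h'
  simp only [CliffordAlgebra.contractLeft_ι_mul, CliffordAlgebra.contractLeft_ι,
    CliffordAlgebra.contractLeft_one, CliffordAlgebra.contractLeft_algebraMap,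
    LinearMap.proj_apply, Pi.single_apply, map_sub, map_smul, map_zero, map_one,
    smul_sub, smul_smul] at h'
  norm_num [show ((2:Fin 5) = 3) = False from by decide, show ((1:Fin 5) = 3) = False from by decide,
    show ((0:Fin 5) = 3) = False from by decide, show ((1:Fin 5) = 2) = False from by decide,
    show ((0:Fin 5) = 2) = False from by decide, show ((0:Fin 5) = 1) = False from by decide] at h'


section ringlemmas
variable {R : Type*} [Ring R]

lemma quad_aux (a : R) (ha : a * a = -1) :
    ((X : R[X]) - C a) * (X + C a) = X ^ 2 + 1 ∧ ((X : R[X]) + C a) * (X - C a) = X ^ 2 + 1 := by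
  constructor <;>
  · noncomm_ring [(Polynomial.commute_X (C a)).eq, ← Polynomial.C_mul, ha]
    simp

lemma quartic_aux (a b : R) (ha : a * a = -1) (hb : b * b = -1) (hc : b * a = a * b) :
    (((X : R[X]) - C a) * (X - C b)) * ((X + C b) * (X + C a)) = (X ^ 2 + 1) ^ 2 ∧
      (((X : R[X]) + C b) * (X + C a)) * ((X - C a) * (X - C b)) = (X ^ 2 + 1) ^ 2 := by
  have x1 : (X : R[X]) * C a = C a * X := (Polynomial.commute_X (C a)).eq
  have x1' : ∀ p : R[X], X * (C a * p) = C a * (X * p) := fun p => by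
    rw [← mul_assoc, x1, mul_assoc]
  have x2 : (X : R[X]) * C b = C b * X := (Polynomial.commute_X (C b)).eq
  have x2' : ∀ p : R[X], X * (C b * p) = C b * (X * p) := fun p => by
    rw [← mul_assoc, x2, mul_assoc]
  have c1 : (C b : R[X]) * C a = C a * C b := by rw [← C_mul, ← C_mul, hc]
  have c1' : ∀ p : R[X], C b * (C a * p) = C a * (C b * p) := fun p => by
    rw [← mul_assoc, c1, mul_assoc]
  have s1 : (C a : R[X]) * C a = -1 := by rw [← C_mul, ha]; simp
  have s1' : ∀ p : R[X], C a * (C a * p) = -p := fun p => by rw [← mul_assoc, s1]; simp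
  have s2 : (C b : R[X]) * C b = -1 := by rw [← C_mul, hb]; simp
  have s2' : ∀ p : R[X], C b * (C b * p) = -p := fun p => by rw [← mul_assoc, s2]; simp
  constructor <;> noncomm_ring [x1, x1', x2, x2', c1, c1', s1, s1', s2, s2']

end ringlemmas

lemma sq_one_ne_zero : ((X : ℝ[X]) ^ 2 + 1) ≠ 0 := fun h => by
  simpa using congrArg (Polynomial.eval 0) h

lemma motion_lin (a : CGA) (ha : a * a = -1) (hr : CliffordAlgebra.reverse a = -a) :
    IsMotionPoly (X - C a) := by
  refine ⟨X ^ 2 + 1, sq_one_ne_zero, ?_, ?_⟩ <;>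
    rw [prev_linear, hr, map_neg, sub_neg_eq_add, Polynomial.map_add, Polynomial.map_pow,
      Polynomial.map_X, Polynomial.map_one]
  · exact (quad_aux a ha).1
  · exact (quad_aux a ha).2

lemma motion_quad (a b : CGA) (ha : a * a = -1) (hb : b * b = -1) (hc : b * a = a * b)
    (hra : CliffordAlgebra.reverse a = -a) (hrb : CliffordAlgebra.reverse b = -b) :
    IsMotionPoly ((X - C a) * (X - C b)) := by
  have hp : prev ((X - C a) * (X - C b)) = (X + C b) * (X + C a) := by
    rw [prev_mul, prev_linear, prev_linear, hra, hrb, map_neg, map_neg, sub_neg_eq_add,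
      sub_neg_eq_add]
  refine ⟨(X ^ 2 + 1) ^ 2, pow_ne_zero _ sq_one_ne_zero, ?_, ?_⟩ <;>
    rw [hp, Polynomial.map_pow, Polynomial.map_add, Polynomial.map_pow,
      Polynomial.map_X, Polynomial.map_one]
  · exact (quartic_aux a b ha hb hc).1
  · exact (quartic_aux a b ha hb hc).2

/-- the Villarceau motion `C = (t−e₁₂)(t−e₃₊)`: with `h₁ = e₁₂`,
`h₂ = e₃₊`: (i) `h₁` and `h₂` commute; (ii) `t−h₁`, `t−h₂` and
`C = (t−h₁)(t−h₂)` are motion polynomials; (iii) `u := h₁ − h̃₂ = e₁₂ + e₃₊`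
satisfies `u·ũ = 2(1 − e₁₂₃₊)` and `(u·ũ)(1 + e₁₂₃₊) = 0` with `1 + e₁₂₃₊ ≠ 0`,
so `u·ũ` is a zero divisor; hence `h₁ − h̃₂` is not invertible and the factorization
of `C` is irregular. -/
theorem stmt13 :
    let h₁ : CGA := eCGA 0 * eCGA 1
    let h₂ : CGA := eCGA 2 * eCGA 3
    let u : CGA := h₁ - CliffordAlgebra.reverse h₂
    let e1234 : CGA := eCGA 0 * eCGA 1 * eCGA 2 * eCGA 3
    (h₁ * h₂ = h₂ * h₁) ∧
    IsMotionPoly (X - C h₁) ∧ IsMotionPoly (X - C h₂) ∧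
    IsMotionPoly ((X - C h₁) * (X - C h₂)) ∧
    (u = eCGA 0 * eCGA 1 + eCGA 2 * eCGA 3) ∧
    (u * CliffordAlgebra.reverse u = 2 * (1 - e1234)) ∧
    ((u * CliffordAlgebra.reverse u) * (1 + e1234) = 0) ∧
    (1 + e1234 ≠ 0) ∧
    ¬ IsUnit (h₁ - CliffordAlgebra.reverse h₂) := by
  intro h₁ h₂ u e1234
  have A10 := e_anti' 1 0 (by decide)
  have A20 := e_anti' 2 0 (by decide)
  have A21 := e_anti' 2 1 (by decide)
  have A30 := e_anti' 3 0 (by decide)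
  have A31 := e_anti' 3 1 (by decide)
  have A32 := e_anti' 3 2 (by decide)
  have a10 := e_anti 1 0 (by decide)
  have a20 := e_anti 2 0 (by decide)
  have a21 := e_anti 2 1 (by decide)
  have a30 := e_anti 3 0 (by decide)
  have a31 := e_anti 3 1 (by decide)
  have a32 := e_anti 3 2 (by decide)
  have S0 := e_sq' 0 (by decide)
  have S1 := e_sq' 1 (by decide)
  have S2 := e_sq' 2 (by decide)
  have S3 := e_sq' 3 (by decide)
  have s0 := e_sq 0 (by decide)
  have s1 := e_sq 1 (by decide)
  have s2 := e_sq 2 (by decide)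
  have s3 := e_sq 3 (by decide)
  have hcomm : h₁ * h₂ = h₂ * h₁ := by
    show (eCGA 0 * eCGA 1) * (eCGA 2 * eCGA 3) = (eCGA 2 * eCGA 3) * (eCGA 0 * eCGA 1)
    noncomm_ring [A10, A20, A21, A30, A31, A32, a10, a20, a21, a30, a31, a32, S0, S1, S2, S3,
      s0, s1, s2, s3]
  have hsq1 : h₁ * h₁ = -1 := by
    show (eCGA 0 * eCGA 1) * (eCGA 0 * eCGA 1) = -1
    noncomm_ring [A10, a10, S0, S1, s0, s1]
  have hsq2 : h₂ * h₂ = -1 := by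
    show (eCGA 2 * eCGA 3) * (eCGA 2 * eCGA 3) = -1
    noncomm_ring [A32, a32, S2, S3, s2, s3]
  have hrev1 : CliffordAlgebra.reverse h₁ = -h₁ := by
    show CliffordAlgebra.reverse (eCGA 0 * eCGA 1) = -(eCGA 0 * eCGA 1)
    rw [rev_pair]; exact a10
  have hrev2 : CliffordAlgebra.reverse h₂ = -h₂ := by
    show CliffordAlgebra.reverse (eCGA 2 * eCGA 3) = -(eCGA 2 * eCGA 3)
    rw [rev_pair]; exact a32
  have hu : u = h₁ + h₂ := by
    show h₁ - CliffordAlgebra.reverse h₂ = h₁ + h₂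
    rw [hrev2, sub_neg_eq_add]
  have hru : CliffordAlgebra.reverse u = -u := by
    show CliffordAlgebra.reverse (h₁ - CliffordAlgebra.reverse h₂) = -u
    rw [map_sub, CliffordAlgebra.reverse_reverse, hrev1, hu]
    abel
  have huu : u * CliffordAlgebra.reverse u = 2 * (1 - e1234) := by
    rw [hru, hu]
    show (h₁ + h₂) * -(h₁ + h₂) = 2 * (1 - e1234)
    show ((eCGA 0 * eCGA 1) + eCGA 2 * eCGA 3) * -((eCGA 0 * eCGA 1) + eCGA 2 * eCGA 3)
      = 2 * (1 - eCGA 0 * eCGA 1 * eCGA 2 * eCGA 3)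
    noncomm_ring [A10, A20, A21, A30, A31, A32, a10, a20, a21, a30, a31, a32, S0, S1, S2, S3,
      s0, s1, s2, s3]
  have hzero : (u * CliffordAlgebra.reverse u) * (1 + e1234) = 0 := by
    rw [huu]
    show (2 * (1 - eCGA 0 * eCGA 1 * eCGA 2 * eCGA 3)) *
      (1 + eCGA 0 * eCGA 1 * eCGA 2 * eCGA 3) = 0
    noncomm_ring [A10, A20, A21, A30, A31, A32, a10, a20, a21, a30, a31, a32, S0, S1, S2, S3,
      s0, s1, s2, s3]
  have hne : 1 + e1234 ≠ 0 := one_add_e1234_ne_zero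
  refine ⟨hcomm, motion_lin _ hsq1 hrev1, motion_lin _ hsq2 hrev2,
    motion_quad _ _ hsq1 hsq2 hcomm.symm hrev1 hrev2, by rw [hu], huu, hzero, hne, ?_⟩
  intro hU
  have hU' : IsUnit u := hU
  have hunit : IsUnit (u * CliffordAlgebra.reverse u) := hU'.mul (hru ▸ hU'.neg)
  exact hne (hunit.mul_right_eq_zero.mp hzero)
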